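/- arXiv:0906.2080 — 3 statements merged into one kernel-verified Lean document; each statement's English description precedes it below -/
import Mathlib

section
/- Let $m \in \mathbb{N}$, $p \in (0,1)$, and let $b_{m,p}(k) = \binom{m}{k} p^k (1-p)^{m-k}$ denote the binomial probability mass function. If $r$ is an integer with $r > mp$, then $\sum_{k=r}^{m} b_{m,p}(k) \le b_{m,p}(r) \cdot \frac{r(1-p)}{r - mp}$. -/
/-!
The ratio identity `(k + 1)(1 - p) b(k + 1) = (m - k) p b(k)` makes
`(k - m p) b(k) = k (1 - p) b(k) - (k + 1)(1 - p) b(k + 1)` a telescoping difference, so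
`∑_{k=r}^m (k - m p) b(k) = r (1 - p) b(r)` exactly. Every weight `k - m p` in this sum is at
least `r - m p > 0`, which gives `(r - m p) ∑_{k=r}^m b(k) ≤ r (1 - p) b(r)`.
-/

open Finset

/-- Binomial pmf: `b m p k = C(m,k) p^k (1-p)^(m-k)`. -/
noncomputable def binomPMF (m : ℕ) (p : ℝ) (k : ℕ) : ℝ :=
  (m.choose k : ℝ) * p ^ k * (1 - p) ^ (m - k)

namespace binomPMF

variable {m : ℕ} {p : ℝ}

lemma nonneg (hp0 : 0 ≤ p) (hp1 : p ≤ 1) (k : ℕ) : 0 ≤ binomPMF m p k := by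
  have : 0 ≤ 1 - p := by linarith
  unfold binomPMF
  positivity

lemma eq_zero_of_lt {k : ℕ} (h : m < k) : binomPMF m p k = 0 := by
  simp [binomPMF, Nat.choose_eq_zero_of_lt h]

lemma succ_mul_one_sub (k : ℕ) :
    ((k + 1 : ℕ) : ℝ) * (1 - p) * binomPMF m p (k + 1) = ((m - k : ℕ) : ℝ) * p * binomPMF m p k := by
  rcases lt_or_ge k m with hkm | hmk
  · have hchoose : (m.choose (k + 1) : ℝ) * ((k + 1 : ℕ) : ℝ) = m.choose k * ((m - k : ℕ) : ℝ) := by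
      exact_mod_cast Nat.choose_succ_right_eq m k
    have hpow : (1 - p) ^ (m - k) = (1 - p) ^ (m - (k + 1)) * (1 - p) := by
      rw [← pow_succ]
      congr 1
      omega
    unfold binomPMF
    rw [hpow]
    linear_combination (p ^ (k + 1) * (1 - p) ^ (m - (k + 1)) * (1 - p)) * hchoose
  · rw [eq_zero_of_lt (by omega), Nat.sub_eq_zero_of_le hmk]
    simp

theorem sum_Icc_sub_mean_mul (r : ℕ) :
    ∑ k ∈ Icc r m, ((k : ℝ) - m * p) * binomPMF m p k = r * (1 - p) * binomPMF m p r := by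
  rcases le_or_gt r (m + 1) with hr | hr
  · set f : ℕ → ℝ := fun k ↦ -((k : ℝ) * (1 - p) * binomPMF m p k)
    have hstep : ∀ k ∈ Icc r m, ((k : ℝ) - m * p) * binomPMF m p k = f (k + 1) - f k := by
      intro k hk
      have hkm : k ≤ m := (mem_Icc.mp hk).2
      have := succ_mul_one_sub (m := m) (p := p) k
      push_cast [hkm] at this
      simp only [f]
      push_cast
      linear_combination this
    rw [sum_congr rfl hstep, ← Ico_add_one_right_eq_Icc, sum_Ico_sub f hr]
    simp only [f, eq_zero_of_lt (Nat.lt_succ_self m)]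
    ring
  · rw [Icc_eq_empty_of_lt (by omega), sum_empty, eq_zero_of_lt (by omega), mul_zero]

end binomPMF

/-- Binomial tail bound: if `r > m p` then
`∑_{k=r}^m b_{m,p}(k) ≤ b_{m,p}(r) · r(1-p)/(r - mp)`. -/
theorem binomial_tail_bound (m : ℕ) (p : ℝ) (hp0 : 0 < p) (hp1 : p < 1)
    (r : ℕ) (hr : (m : ℝ) * p < r) :
    ∑ k ∈ Finset.Icc r m, binomPMF m p k ≤
      binomPMF m p r * ((r : ℝ) * (1 - p) / ((r : ℝ) - (m : ℝ) * p)) := by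
  have hgap : 0 < (r : ℝ) - m * p := by linarith
  have hweighted : ((r : ℝ) - m * p) * ∑ k ∈ Icc r m, binomPMF m p k ≤
      r * (1 - p) * binomPMF m p r := by
    rw [mul_sum, ← binomPMF.sum_Icc_sub_mean_mul]
    refine sum_le_sum fun k hk ↦ mul_le_mul_of_nonneg_right ?_ (binomPMF.nonneg hp0.le hp1.le k)
    have : (r : ℝ) ≤ k := by exact_mod_cast (mem_Icc.mp hk).1
    linarith
  rw [mul_div_assoc', le_div_iff₀ hgap]
  linarith
end

section
/- Let $Z_1, \dots, Z_n$ be (possibly dependent) $\{0,1\}$-valued random variables, $S_n = \sum_{t=1}^n Z_t$, and let $Y$ be Poisson distributed with mean $\lambda = \sum_{t=1}^n \mathbb{E} Z_t$. Then $\sup_{A \subset \mathbb{Z}_+} |\mathbb{P}(S_n \in A) - \mathbb{P}(Y \in A)| \le \sum_{t=1}^n (\mathbb{E} Z_t)^2 + \sum_{t=1}^n \mathbb{E}\, |\mathbb{E}[Z_t \mid Z_1, \dots, Z_{t-1}] - \mathbb{E} Z_t|$. -/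
/-!
With `S i = Z 1 + ⋯ + Z i` and `ρ i = λ (i + 1) + ⋯ + λ n`, interpolate by
`D i = P(S i + Y i ∈ A)` where `Y i ~ Poisson(ρ i)` is independent of the `Z t`, so that
`D n = P(S n ∈ A)` and `D 0 = P(Y ∈ A)`. Going from `D (t - 1)` to `D t` replaces a
`Poisson(λ t)` summand by `Z t`. Given `Z 1, …, Z (t - 1)`, the variable `Z t` is Bernoulli with
parameter `E[Z t | Z 1, …, Z (t - 1)]`, and swapping that parameter for `λ t` costs at most
`E|E[Z t | Z 1, …, Z (t - 1)] - λ t|`; a Bernoulli(`λ t`) and a Poisson(`λ t`) variable have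
expectations within `λ t ^ 2` of each other on every `[0, 1]`-valued function.
-/

open MeasureTheory ProbabilityTheory Finset
open scoped NNReal

noncomputable def poisPMF (r : ℝ) (k : ℕ) : ℝ :=
  Real.exp (-r) * r ^ k / (k.factorial : ℝ)

lemma sum_range_add_one_eq_sum_Icc {M : Type*} [AddCommMonoid M] (f : ℕ → M) (n : ℕ) :
    ∑ u ∈ range n, f (u + 1) = ∑ t ∈ Icc 1 n, f t := by
  rw [range_eq_Ico, sum_Ico_add' f 0 n 1, zero_add, Ico_add_one_right_eq_Icc]

lemma integrable_comp_of_abs_le {Ω α : Type*} {mΩ : MeasurableSpace Ω} {P : Measure Ω}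
    [IsFiniteMeasure P] [MeasurableSpace α] [DiscreteMeasurableSpace α] {X : Ω → α}
    (hX : Measurable X) {g : α → ℝ} {C : ℝ} (hg : ∀ a, |g a| ≤ C) :
    Integrable (fun ω => g (X ω)) P :=
  .of_bound (Measurable.of_discrete.comp hX).aestronglyMeasurable C (ae_of_all _ fun ω => hg (X ω))

lemma integral_poissonMeasure_add (a b : ℝ≥0) {F : ℕ → ℝ} (hF : Integrable F Po(a + b)) :
    ∫ k, F k ∂Po(a + b) = ∫ j, ∫ i, F (i + j) ∂Po(a) ∂Po(b) := by
  rw [← poissonMeasure_conv_poissonMeasure, Measure.conv] at hF ⊢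
  rw [integrable_map_measure Measurable.of_discrete.aestronglyMeasurable
    Measurable.of_discrete.aemeasurable] at hF
  rw [integral_map Measurable.of_discrete.aemeasurable Measurable.of_discrete.aestronglyMeasurable]
  exact integral_prod_symm _ hF

lemma abs_bernoulli_sub_integral_poissonMeasure_le (l : ℝ≥0) {G : ℕ → ℝ}
    (hG : ∀ k, G k ∈ Set.Icc 0 1) :
    |(1 - l) * G 0 + l * G 1 - ∫ k, G k ∂Po(l)| ≤ l ^ 2 := by
  -- The Bernoulli weights minus the Poisson ones are `1 - l - e⁻ˡ ≤ 0` at `0`,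
  -- `l (1 - e⁻ˡ) ∈ [0, l ^ 2]` at `1` and `-q k ≤ 0` beyond, and they sum to `0`.
  set q : ℕ → ℝ := fun n => Real.exp (-l) * l ^ n / n.factorial
  have hq : HasSum q 1 := hasSum_one_poissonMeasure l
  have hq0 : ∀ n, 0 ≤ q n := fun n => by positivity
  have hqG : Summable fun n => q n * G n :=
    hq.summable.of_nonneg_of_le (fun n => mul_nonneg (hq0 n) (hG n).1)
      (fun n => mul_le_of_le_one_right (hq0 n) (hG n).2)
  have htail : ∑' n, q (n + 2) = 1 - q 0 - q 1 := by
    have := hq.summable.sum_add_tsum_nat_add 2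
    rw [hq.tsum_eq, sum_range_succ, sum_range_one] at this
    linarith
  have hT0 : 0 ≤ ∑' n, q (n + 2) * G (n + 2) :=
    tsum_nonneg fun n => mul_nonneg (hq0 _) (hG _).1
  have hT1 : ∑' n, q (n + 2) * G (n + 2) ≤ 1 - q 0 - q 1 := htail ▸
    ((summable_nat_add_iff 2).mpr hqG).tsum_le_tsum
      (fun n => mul_le_of_le_one_right (hq0 _) (hG _).2) ((summable_nat_add_iff 2).mpr hq.summable)
  rw [integral_poissonMeasure]
  simp only [smul_eq_mul]
  rw [← hqG.sum_add_tsum_nat_add 2, sum_range_succ, sum_range_one]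
  have hq0' : q 0 = Real.exp (-l) := by simp [q]
  have hq1' : q 1 = Real.exp (-l) * l := by simp [q]
  rw [hq0', hq1'] at hT1 ⊢
  have e1 : 1 - (l : ℝ) ≤ Real.exp (-l) := by linarith [Real.add_one_le_exp (-(l : ℝ))]
  have e2 : Real.exp (-l) ≤ 1 := Real.exp_le_one_iff.mpr (by simp)
  have hl : (0 : ℝ) ≤ l := l.2
  obtain ⟨h00, h01⟩ := hG 0
  obtain ⟨h10, h11⟩ := hG 1
  rw [abs_le]
  constructor <;> nlinarith [mul_nonneg hl h10, mul_nonneg hl (sub_nonneg.mpr h11)]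

noncomputable def poissonAverage (r : ℝ≥0) (f : ℕ → ℝ) (x : ℕ) : ℝ := ∫ k, f (x + k) ∂Po(r)

section poissonAverage

variable {f : ℕ → ℝ}

lemma integrable_poissonAverage_integrand (r : ℝ≥0) (hf : ∀ k, f k ∈ Set.Icc 0 1) (x : ℕ) :
    Integrable (fun k => f (x + k)) Po(r) :=
  integrable_comp_of_abs_le (X := fun k => x + k) Measurable.of_discrete
    fun k => (abs_of_nonneg (hf k).1).trans_le (hf k).2

lemma poissonAverage_mem_Icc (r : ℝ≥0) (hf : ∀ k, f k ∈ Set.Icc 0 1) (x : ℕ) :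
    poissonAverage r f x ∈ Set.Icc 0 1 := by
  refine ⟨integral_nonneg fun k => (hf _).1, ?_⟩
  calc poissonAverage r f x ≤ ∫ _, (1 : ℝ) ∂Po(r) :=
        integral_mono (integrable_poissonAverage_integrand r hf x) (integrable_const 1)
          fun k => (hf _).2
    _ = 1 := by simp

@[simp]
lemma poissonAverage_zero (f : ℕ → ℝ) : poissonAverage 0 f = f := by
  ext x
  rw [poissonAverage, integral_poissonMeasure, tsum_eq_single 0 fun n hn => by simp [hn]]
  simp

lemma poissonAverage_add (a b : ℝ≥0) (hf : ∀ k, f k ∈ Set.Icc 0 1) (x : ℕ) :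
    poissonAverage (a + b) f x = poissonAverage b (poissonAverage a f) x := by
  rw [poissonAverage, integral_poissonMeasure_add a b (integrable_poissonAverage_integrand _ hf x)]
  simp only [poissonAverage, add_comm, add_left_comm]

lemma poissonAverage_indicator_zero (r : ℝ≥0) (A : Set ℕ) :
    poissonAverage r (A.indicator 1) 0 = ∑' k : A, poisPMF r k := by
  rw [poissonAverage, integral_poissonMeasure, _root_.tsum_subtype]
  congr 1 with k
  by_cases hk : k ∈ A <;> simp [hk, poisPMF]

lemma abs_bernoulli_sub_poissonAverage_le (l : ℝ≥0) {g : ℕ → ℝ} (hg : ∀ k, g k ∈ Set.Icc 0 1)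
    (x : ℕ) : |(1 - l) * g x + l * g (x + 1) - poissonAverage l g x| ≤ l ^ 2 := by
  simpa [poissonAverage] using
    abs_bernoulli_sub_integral_poissonMeasure_le l (G := fun k => g (x + k)) fun k => hg _

end poissonAverage

section step

variable {Ω : Type*} {m mΩ : MeasurableSpace Ω} {P : Measure Ω} {X Z : Ω → ℕ}

lemma abs_integral_comp_add_sub_le [IsFiniteMeasure P] (hm : m ≤ mΩ) (hX : Measurable[m] X)
    (hZ : Measurable Z) (hZ1 : ∀ ω, Z ω ≤ 1) {g : ℕ → ℝ} (hg : ∀ k, g k ∈ Set.Icc 0 1) (l : ℝ) :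
    |∫ ω, g (X ω + Z ω) ∂P - ∫ ω, ((1 - l) * g (X ω) + l * g (X ω + 1)) ∂P| ≤
      ∫ ω, |P[fun ω => (Z ω : ℝ) | m] ω - l| ∂P := by
  set z : Ω → ℝ := fun ω => (Z ω : ℝ)
  set w : Ω → ℝ := fun ω => g (X ω + 1) - g (X ω)
  have hXm : Measurable X := hX.mono hm le_rfl
  have hg_abs : ∀ k, |g k| ≤ 1 := fun k => (abs_of_nonneg (hg k).1).trans_le (hg k).2
  have hΔg : ∀ k, |g (k + 1) - g k| ≤ 1 := fun k =>
    abs_sub_le_of_nonneg_of_le (hg _).1 (hg _).2 (hg _).1 (hg _).2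
  have hgX : Integrable (fun ω => g (X ω)) P := integrable_comp_of_abs_le hXm hg_abs
  have hw : Integrable w P := integrable_comp_of_abs_le hXm hΔg
  have hz : Integrable z P := .of_bound (Measurable.of_discrete.comp hZ).aestronglyMeasurable 1
    (ae_of_all _ fun ω => by simpa [z] using hZ1 ω)
  have hzw : Integrable (fun ω => z ω * w ω) P :=
    hz.mul_bdd hw.aestronglyMeasurable (ae_of_all _ fun ω => hΔg (X ω))
  have hc : Integrable (P[z | m]) P := integrable_condExp
  have hcw : Integrable (fun ω => P[z | m] ω * w ω) P :=
    hc.mul_bdd hw.aestronglyMeasurable (ae_of_all _ fun ω => hΔg (X ω))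
  have hpull : ∫ ω, z ω * w ω ∂P = ∫ ω, P[z | m] ω * w ω ∂P := by
    rw [← integral_condExp hm]
    exact integral_congr_ae (condExp_mul_of_stronglyMeasurable_right
      ((measurable_of_countable (fun k => g (k + 1) - g k)).comp hX).stronglyMeasurable hzw hz)
  have hgXZ : ∀ ω, g (X ω + Z ω) = g (X ω) + z ω * w ω := fun ω => by
    rcases Nat.le_one_iff_eq_zero_or_eq_one.mp (hZ1 ω) with h | h <;> simp [z, w, h]
  calc |∫ ω, g (X ω + Z ω) ∂P - ∫ ω, ((1 - l) * g (X ω) + l * g (X ω + 1)) ∂P|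
      = |∫ ω, (g (X ω) + z ω * w ω) ∂P - ∫ ω, (g (X ω) + l * w ω) ∂P| := by
        simp_rw [hgXZ, w]; ring_nf
    _ = |∫ ω, (P[z | m] ω - l) * w ω ∂P| := by
        simp_rw [sub_mul]
        rw [integral_add hgX hzw, integral_add hgX (hw.const_mul l), hpull,
          integral_sub hcw (hw.const_mul l)]
        ring_nf
    _ ≤ ∫ ω, |P[z | m] ω - l| ∂P := by
        refine abs_integral_le_integral_abs.trans
          (integral_mono ?_ (hc.sub (integrable_const l)).abs fun ω => ?_)
        · exact ((hcw.sub (hw.const_mul l)).congr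
            (ae_of_all _ fun ω => by simp only [Pi.sub_apply]; ring)).abs
        · rw [abs_mul]
          exact mul_le_of_le_one_right (abs_nonneg _) (hΔg _)

lemma abs_integral_poissonAverage_add_sub_le [IsProbabilityMeasure P] (hm : m ≤ mΩ)
    (hX : Measurable[m] X) (hZ : Measurable Z) (hZ1 : ∀ ω, Z ω ≤ 1) {f : ℕ → ℝ}
    (hf : ∀ k, f k ∈ Set.Icc 0 1) (μ l : ℝ≥0) :
    |∫ ω, poissonAverage μ f (X ω + Z ω) ∂P - ∫ ω, poissonAverage (μ + l) f (X ω) ∂P| ≤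
      l ^ 2 + ∫ ω, |P[fun ω => (Z ω : ℝ) | m] ω - l| ∂P := by
  set g := poissonAverage μ f
  have hg : ∀ k, g k ∈ Set.Icc 0 1 := poissonAverage_mem_Icc μ hf
  have hg_abs : ∀ k, |g k| ≤ 1 := fun k => (abs_of_nonneg (hg k).1).trans_le (hg k).2
  have hXm : Measurable X := hX.mono hm le_rfl
  have hbern : Integrable (fun ω => (1 - l) * g (X ω) + l * g (X ω + 1)) P :=
    ((integrable_comp_of_abs_le hXm hg_abs).const_mul _).add
      ((integrable_comp_of_abs_le (g := fun k => g (k + 1)) hXm fun k => hg_abs _).const_mul _)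
  have hpois : Integrable (fun ω => poissonAverage (μ + l) f (X ω)) P :=
    integrable_comp_of_abs_le hXm fun k => have h := poissonAverage_mem_Icc (μ + l) hf k
      (abs_of_nonneg h.1).trans_le h.2
  have hcomp := abs_integral_comp_add_sub_le (P := P) hm hX hZ hZ1 hg l
  have hmix : |∫ ω, ((1 - l) * g (X ω) + l * g (X ω + 1)) ∂P -
      ∫ ω, poissonAverage (μ + l) f (X ω) ∂P| ≤ l ^ 2 := by
    rw [← integral_sub hbern hpois]
    calc ‖∫ ω, ((1 - l) * g (X ω) + l * g (X ω + 1) - poissonAverage (μ + l) f (X ω)) ∂P‖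
        ≤ (l : ℝ) ^ 2 * P.real Set.univ :=
          norm_integral_le_of_norm_le_const (ae_of_all _ fun ω => by
            rw [poissonAverage_add μ l hf]
            exact abs_bernoulli_sub_poissonAverage_le l hg (X ω))
      _ = l ^ 2 := by simp
  exact (abs_sub_le _ (∫ ω, ((1 - l) * g (X ω) + l * g (X ω + 1)) ∂P) _).trans (by linarith)

end step

lemma measurable_sum_Icc_comap {Ω : Type*} [MeasurableSpace Ω] (Z : ℕ → Ω → ℕ) (k : ℕ) :
    Measurable[MeasurableSpace.comap (fun ω (i : Fin k) => Z (i + 1) ω) inferInstance]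
      (fun ω => ∑ t ∈ Icc 1 k, Z t ω) := by
  have h : (fun ω => ∑ t ∈ Icc 1 k, Z t ω) =
      (fun v : Fin k → ℕ => ∑ i, v i) ∘ fun ω (i : Fin k) => Z (i + 1) ω := by
    ext ω
    simp only [Function.comp_apply, ← sum_range_add_one_eq_sum_Icc (Z · ω),
      Fin.sum_univ_eq_sum_range (fun i => Z (i + 1) ω)]
  rw [h]
  exact Measurable.of_discrete.comp (comap_measurable _)

lemma abs_sub_le_sum_Icc_of_abs_sub_le {D b : ℕ → ℝ} {n : ℕ}
    (h : ∀ t ∈ Icc 1 n, |D t - D (t - 1)| ≤ b t) : |D n - D 0| ≤ ∑ t ∈ Icc 1 n, b t := by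
  rw [← sum_range_add_one_eq_sum_Icc, abs_sub_comm, ← Real.dist_eq]
  refine (dist_le_range_sum_dist D n).trans (sum_le_sum fun u hu => ?_)
  simpa [Real.dist_eq, abs_sub_comm] using h (u + 1) (by simp at hu ⊢; omega)

/-- Serfling's Poisson approximation theorem: for (possibly dependent)
`{0,1}`-valued random variables `Z 1, …, Z n` with sum `S`, and `Y` Poisson
with mean `λ = ∑ E[Z t]`, for every `A ⊆ ℤ₊`:
`|P(S ∈ A) - P(Y ∈ A)| ≤ ∑ (E Z t)² + ∑ E|E[Z t | Z 1,…,Z (t-1)] - E Z t|`. -/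
theorem serfling_poisson_approximation
    {Ω : Type} [MeasurableSpace Ω] (P : Measure Ω) [IsProbabilityMeasure P]
    (n : ℕ) (Z : ℕ → Ω → ℕ)
    (hZmeas : ∀ t, Measurable (Z t))
    (hZle : ∀ t ω, Z t ω ≤ 1)
    (A : Set ℕ) :
    |(P {ω | (∑ t ∈ Finset.Icc 1 n, Z t ω) ∈ A}).toReal -
        ∑' k : A, poisPMF (∑ t ∈ Finset.Icc 1 n, ∫ ω, (Z t ω : ℝ) ∂P) (k : ℕ)| ≤
      (∑ t ∈ Finset.Icc 1 n, (∫ ω, (Z t ω : ℝ) ∂P) ^ 2) +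
      ∑ t ∈ Finset.Icc 1 n, ∫ ω,
        |(P[fun ω' => (Z t ω' : ℝ) |
            MeasurableSpace.comap
              (fun ω' (i : Fin (t - 1)) => Z (i + 1) ω') inferInstance]) ω -
          ∫ ω', (Z t ω' : ℝ) ∂P| ∂P := by
  set lam : ℕ → ℝ≥0 := fun t => ⟨∫ ω, (Z t ω : ℝ) ∂P, integral_nonneg fun ω => Nat.cast_nonneg _⟩
  set S : ℕ → Ω → ℕ := fun i ω => ∑ t ∈ Icc 1 i, Z t ω
  set ρ : ℕ → ℝ≥0 := fun i => ∑ t ∈ Icc (i + 1) n, lam t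
  set D : ℕ → ℝ := fun i => ∫ ω, poissonAverage (ρ i) (A.indicator 1) (S i ω) ∂P
  have hA : ∀ k, A.indicator (1 : ℕ → ℝ) k ∈ Set.Icc 0 1 := fun k => by
    by_cases hk : k ∈ A <;> simp [hk]
  have hDn : D n = (P {ω | (∑ t ∈ Icc 1 n, Z t ω) ∈ A}).toReal := by
    simp only [D, ρ, Icc_eq_empty_of_lt n.lt_succ_self, sum_empty, poissonAverage_zero]
    exact integral_indicator_one
      ((Finset.measurable_sum _ fun t _ => hZmeas t) (.of_discrete (s := A)))
  have hD0 : D 0 = ∑' k : A, poisPMF (∑ t ∈ Icc 1 n, ∫ ω, (Z t ω : ℝ) ∂P) k := by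
    simp [D, S, ρ, poissonAverage_indicator_zero]
    rfl
  rw [← hDn, ← hD0, ← sum_add_distrib]
  refine abs_sub_le_sum_Icc_of_abs_sub_le fun t ht => ?_
  obtain ⟨u, rfl⟩ : ∃ u, t = u + 1 := ⟨t - 1, by grind⟩
  have hS : S (u + 1) = fun ω => S u ω + Z (u + 1) ω :=
    funext fun ω => sum_Icc_succ_top (by omega) _
  have hρ : ρ u = ρ (u + 1) + lam (u + 1) := by
    rw [add_comm]
    simp only [ρ]
    rw [Icc_add_one_left_eq_Ioc (u + 1), add_sum_Ioc_eq_sum_Icc (mem_Icc.mp ht).2]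
  simp only [D, hS, hρ, Nat.add_sub_cancel]
  exact abs_integral_poissonAverage_add_sub_le
    (measurable_pi_lambda _ fun i => hZmeas _).comap_le (measurable_sum_Icc_comap Z u)
    (hZmeas _) (hZle _) hA (ρ (u + 1)) (lam (u + 1))
end

section
/- Let $X$ be an INAR(1) process with $X_0 = 0$, parameter $1 - h/n^2$ ($h \ge 0$ fixed), and finite innovation variance. Then $\lim_{n \to \infty} \mathbb{P}_{1-h/n^2}\{\exists t \in \{1, \dots, n\}: X_{t-1} - \theta \circ X_{t-1} \ge 2\} = 0$; that is, with probability tending to one, at most one 'death' occurs in every time interval during $[0, n]$. -/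
open MeasureTheory ProbabilityTheory Filter Finset

/-- An INAR(1) process with autoregression parameter `θ` and innovation
distribution `G` on `ℕ`, defined on the probability space `(Ω, P)`:
`X 0 = 0` and `X (t+1) = θ ∘ X t + ε (t+1)`, where the binomial thinning
`θ ∘ X t` is the sum of `X t` i.i.d. Bernoulli(θ) variables `Z (t+1) j`,
all thinning variables and innovations being jointly independent. -/
structure INAR {Ω : Type} [MeasurableSpace Ω] (P : Measure Ω)
    (θ : ℝ) (G : PMF ℕ) where
  Z : ℕ → ℕ → Ω → ℕ
  ε : ℕ → Ω → ℕ
  X : ℕ → Ω → ℕ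
  hZmeas : ∀ t j, Measurable (Z t j)
  hεmeas : ∀ t, Measurable (ε t)
  hZle : ∀ t j ω, Z t j ω ≤ 1
  hZdist : ∀ t j, P {ω | Z t j ω = 1} = ENNReal.ofReal θ
  hεdist : ∀ t k, P {ω | ε t ω = k} = G k
  hIndep : iIndepFun
      (Sum.elim (fun p : ℕ × ℕ => Z p.1 p.2) ε) P
  hX0 : ∀ ω, X 0 ω = 0
  hXrec : ∀ t ω, X (t + 1) ω =
      (∑ j ∈ Finset.range (X t ω), Z (t + 1) j ω) + ε (t + 1) ω

open scoped ENNReal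

/-!
Conditionally on `X_{t-1} = m`, the step-`t` deaths are `m` independent Bernoulli variables with
success probability `q = h/n²`, so at least two of them die with probability at most
`m² q²`; hence `P(deaths ≥ 2 at step t) ≤ q² E[X_{t-1}²]`. Since every individual is an
innovation, `X_{t-1} ≤ ε_1 + ⋯ + ε_{t-1}` and Cauchy–Schwarz gives `E[X_{t-1}²] ≤ n² E[ε²]`.
A union bound over the `n` steps leaves `n · (h/n²)² · n² E[ε²] = h² E[ε²] / n → 0`.
-/

lemma Finset.card_filter_eq_zero_eq_card_sub_sum {ι : Type*} (s : Finset ι) {f : ι → ℕ}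
    (hf : ∀ i, f i ≤ 1) : #{i ∈ s | f i = 0} = #s - ∑ i ∈ s, f i := by
  have hsum : ∑ i ∈ s, f i = #{i ∈ s | ¬f i = 0} := by
    rw [card_filter]
    exact sum_congr rfl fun i _ => by have := hf i; split_ifs <;> omega
  rw [hsum, ← card_filter_add_card_filter_not (s := s) (fun i => f i = 0)]
  omega

lemma Measurable.sum_range_comp {Ω : Type*} [mΩ : MeasurableSpace Ω] {N : Ω → ℕ}
    {f : ℕ → Ω → ℕ} (hN : Measurable N) (hf : ∀ j, Measurable (f j)) :
    Measurable fun ω => ∑ j ∈ range (N ω), f j ω := by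
  have : Measurable fun p : Ω × ℕ => ∑ j ∈ range p.2, f j p.1 :=
    measurable_from_prod_countable_left fun k => Finset.measurable_sum (range k) fun j _ => hf j
  exact this.comp (measurable_id.prodMk hN)

lemma MeasureTheory.lintegral_comp_eq_tsum {Ω : Type*} [MeasurableSpace Ω] {P : Measure Ω}
    {N : Ω → ℕ} (hN : Measurable N) (g : ℕ → ℝ≥0∞) :
    ∫⁻ ω, g (N ω) ∂P = ∑' k, g k * P {ω | N ω = k} := by
  rw [← lintegral_map (measurable_of_countable g) hN, lintegral_countable']
  exact tsum_congr fun k => by rw [Measure.map_apply hN (measurableSet_singleton k)]; rfl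

lemma ENNReal.toReal_one_sub_ofReal_le_abs (x : ℝ) : (1 - ENNReal.ofReal x).toReal ≤ |1 - x| := by
  rcases le_total 0 x with hx | hx
  · rw [← ENNReal.ofReal_one, ← ENNReal.ofReal_sub _ hx, ENNReal.toReal_ofReal']
    exact max_le (le_abs_self _) (abs_nonneg _)
  · rw [ENNReal.ofReal_of_nonpos hx, tsub_zero, ENNReal.toReal_one, abs_of_nonneg (by linarith)]
    linarith

lemma PMF.tsum_sq_mul_ne_top {G : PMF ℕ} (h2 : Summable fun k : ℕ => (k : ℝ) ^ 2 * (G k).toReal) :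
    ∑' k : ℕ, (k : ℝ≥0∞) ^ 2 * G k ≠ ⊤ := by
  have hterm (k : ℕ) : (k : ℝ≥0∞) ^ 2 * G k = ENNReal.ofReal ((k : ℝ) ^ 2 * (G k).toReal) := by
    rw [ENNReal.ofReal_mul (by positivity), ENNReal.ofReal_toReal (G.apply_ne_top k),
      ENNReal.ofReal_pow (Nat.cast_nonneg k), ENNReal.ofReal_natCast]
  simp_rw [hterm, ← ENNReal.ofReal_tsum_of_nonneg (fun k => by positivity) h2]
  exact ENNReal.ofReal_ne_top

namespace INAR

variable {Ω : Type} [MeasurableSpace Ω] {P : Measure Ω} {θ : ℝ} {G : PMF ℕ} (I : INAR P θ G)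

def deaths (t : ℕ) (ω : Ω) : ℕ :=
  I.X (t - 1) ω - ∑ j ∈ range (I.X (t - 1) ω), I.Z t j ω

def drivers : (ℕ × ℕ) ⊕ ℕ → Ω → ℕ :=
  Sum.elim (fun p : ℕ × ℕ => I.Z p.1 p.2) I.ε

def driverTime : (ℕ × ℕ) ⊕ ℕ → ℕ :=
  Sum.elim Prod.fst id

abbrev past (r : ℕ) : MeasurableSpace Ω :=
  ⨆ i ∈ {i | driverTime i ≤ r}, MeasurableSpace.comap (I.drivers i) inferInstance

abbrev thinning (t : ℕ) : MeasurableSpace Ω :=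
  ⨆ i ∈ Set.range fun j => .inl (t, j), MeasurableSpace.comap (I.drivers i) inferInstance

lemma measurable_drivers : ∀ i, Measurable (I.drivers i)
  | .inl (t, j) => I.hZmeas t j
  | .inr t => I.hεmeas t

lemma measurable_drivers_past {r : ℕ} {i : (ℕ × ℕ) ⊕ ℕ} (hi : driverTime i ≤ r) :
    Measurable[I.past r] (I.drivers i) :=
  Measurable.of_comap_le <|
    le_biSup (f := fun i => MeasurableSpace.comap (I.drivers i) inferInstance) hi

lemma past_mono {r s : ℕ} (hrs : r ≤ s) : I.past r ≤ I.past s :=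
  biSup_mono fun _ hi => le_trans hi hrs

lemma measurable_X_past (r : ℕ) : Measurable[I.past r] (I.X r) := by
  induction r with
  | zero => simp only [funext I.hX0, measurable_const]
  | succ r ih =>
    rw [funext (I.hXrec r)]
    refine Measurable.add ?_ (I.measurable_drivers_past (i := .inr (r + 1)) le_rfl)
    exact (ih.mono (I.past_mono r.le_succ) le_rfl).sum_range_comp (mΩ := I.past (r + 1))
      fun j => I.measurable_drivers_past (i := .inl (r + 1, j)) le_rfl

lemma measurable_X (r : ℕ) : Measurable (I.X r) :=
  (I.measurable_X_past r).mono (iSup₂_le fun i _ => (I.measurable_drivers i).comap_le) le_rfl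

lemma indep_past_thinning {t : ℕ} (ht : t ≠ 0) : Indep (I.past (t - 1)) (I.thinning t) P := by
  refine indep_iSup_of_disjoint (fun i => (I.measurable_drivers i).comap_le) I.hIndep ?_
  rw [Set.disjoint_left]
  rintro _ hi ⟨j, rfl⟩
  simp only [Set.mem_ofPred_eq, driverTime, Sum.elim_inl] at hi
  omega

lemma measure_Z_eq_zero [IsProbabilityMeasure P] (t j : ℕ) :
    P {ω | I.Z t j ω = 0} = 1 - ENNReal.ofReal θ := by
  have hcompl : {ω | I.Z t j ω = 0} = {ω | I.Z t j ω = 1}ᶜ := by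
    ext ω
    have := I.hZle t j ω
    simp only [Set.mem_ofPred_eq, Set.mem_compl_iff]
    omega
  rw [hcompl, prob_compl_eq_one_sub (s := {ω | I.Z t j ω = 1})
    (I.hZmeas t j (measurableSet_singleton 1)), I.hZdist]

lemma measure_X_eq_inter_Z_eq_zero [IsProbabilityMeasure P] {t a b : ℕ} (ht : t ≠ 0)
    (hab : a ≠ b) (m : ℕ) :
    P ({ω | I.X (t - 1) ω = m} ∩ ({ω | I.Z t a ω = 0} ∩ {ω | I.Z t b ω = 0}))
      = P {ω | I.X (t - 1) ω = m} * (1 - ENNReal.ofReal θ) ^ 2 := by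
  have hZ (j : ℕ) : MeasurableSet[I.thinning t] {ω | I.Z t j ω = 0} :=
    le_biSup (f := fun i => MeasurableSpace.comap (I.drivers i) inferInstance)
      (Set.mem_range_self j) _ ⟨{0}, measurableSet_singleton 0, rfl⟩
  have hX : MeasurableSet[I.past (t - 1)] {ω | I.X (t - 1) ω = m} :=
    I.measurable_X_past (t - 1) (measurableSet_singleton m)
  have hZZ : IndepFun (I.Z t a) (I.Z t b) P :=
    I.hIndep.indepFun (i := .inl (t, a)) (j := .inl (t, b)) (by simpa using hab)
  have hpair : P ({ω | I.Z t a ω = 0} ∩ {ω | I.Z t b ω = 0}) = (1 - ENNReal.ofReal θ) ^ 2 :=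
    (hZZ.measure_inter_preimage_eq_mul {0} {0} (measurableSet_singleton 0)
      (measurableSet_singleton 0)).trans <|
      (congrArg₂ (· * ·) (I.measure_Z_eq_zero t a) (I.measure_Z_eq_zero t b)).trans (sq _).symm
  rw [((I.indep_past_thinning ht).indepSet_of_measurableSet hX
    ((hZ a).inter (hZ b))).measure_inter_eq_mul, hpair]

lemma deaths_eq_card (t : ℕ) (ω : Ω) :
    I.deaths t ω = #{j ∈ range (I.X (t - 1) ω) | I.Z t j ω = 0} := by
  rw [card_filter_eq_zero_eq_card_sub_sum _ fun j => I.hZle t j ω, card_range]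
  rfl

lemma setOf_two_le_deaths_subset (t : ℕ) :
    {ω | 2 ≤ I.deaths t ω} ⊆ ⋃ m, ⋃ p ∈ (range m).offDiag,
      {ω | I.X (t - 1) ω = m} ∩ ({ω | I.Z t p.1 ω = 0} ∩ {ω | I.Z t p.2 ω = 0}) := by
  intro ω hω
  have hcard : 1 < #{j ∈ range (I.X (t - 1) ω) | I.Z t j ω = 0} := I.deaths_eq_card t ω ▸ hω
  obtain ⟨a, ha, b, hb, hab⟩ := one_lt_card.1 hcard
  simp only [mem_filter, mem_range] at ha hb
  simp only [Set.mem_iUnion, Set.mem_inter_iff, Set.mem_ofPred_eq, mem_offDiag, mem_range]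
  exact ⟨_, (a, b), ⟨ha.1, hb.1, hab⟩, rfl, ha.2, hb.2⟩

lemma measure_two_le_deaths_le [IsProbabilityMeasure P] {t : ℕ} (ht : t ≠ 0) :
    P {ω | 2 ≤ I.deaths t ω}
      ≤ (1 - ENNReal.ofReal θ) ^ 2 * ∫⁻ ω, (I.X (t - 1) ω : ℝ≥0∞) ^ 2 ∂P := by
  calc P {ω | 2 ≤ I.deaths t ω}
      ≤ ∑' m, ∑ p ∈ (range m).offDiag,
          P ({ω | I.X (t - 1) ω = m} ∩ ({ω | I.Z t p.1 ω = 0} ∩ {ω | I.Z t p.2 ω = 0})) :=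
        (measure_mono (I.setOf_two_le_deaths_subset t)).trans <| (measure_iUnion_le _).trans <|
          ENNReal.tsum_le_tsum fun m => measure_biUnion_finset_le _ _
    _ = ∑' m, #(range m).offDiag * (P {ω | I.X (t - 1) ω = m} * (1 - ENNReal.ofReal θ) ^ 2) := by
        refine tsum_congr fun m => ?_
        rw [← nsmul_eq_mul, ← sum_const]
        exact sum_congr rfl fun p hp => I.measure_X_eq_inter_Z_eq_zero ht (mem_offDiag.1 hp).2.2 m
    _ ≤ ∑' m : ℕ, (m : ℝ≥0∞) ^ 2 * (P {ω | I.X (t - 1) ω = m} * (1 - ENNReal.ofReal θ) ^ 2) := by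
        refine ENNReal.tsum_le_tsum fun m => ?_
        have : #(range m).offDiag ≤ m ^ 2 := by
          rw [offDiag_card, card_range, sq]
          exact Nat.sub_le _ _
        gcongr
        exact_mod_cast this
    _ = _ := by
        rw [lintegral_comp_eq_tsum (I.measurable_X _) fun k => (k : ℝ≥0∞) ^ 2,
          ← ENNReal.tsum_mul_left]
        exact tsum_congr fun m => by ring

lemma X_le_sum_ε (t : ℕ) (ω : Ω) : I.X t ω ≤ ∑ s ∈ Icc 1 t, I.ε s ω := by
  induction t with
  | zero => simp [I.hX0]
  | succ t ih =>
    have hthin : ∑ j ∈ range (I.X t ω), I.Z (t + 1) j ω ≤ I.X t ω :=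
      (sum_le_card_nsmul _ _ 1 fun j _ => I.hZle _ j ω).trans_eq (by simp)
    rw [I.hXrec, sum_Icc_succ_top (by omega)]
    omega

lemma lintegral_ε_sq (t : ℕ) :
    ∫⁻ ω, (I.ε t ω : ℝ≥0∞) ^ 2 ∂P = ∑' k : ℕ, (k : ℝ≥0∞) ^ 2 * G k := by
  rw [lintegral_comp_eq_tsum (I.hεmeas t) fun k => (k : ℝ≥0∞) ^ 2]
  simp only [I.hεdist]

lemma lintegral_X_sq_le (t : ℕ) :
    ∫⁻ ω, (I.X t ω : ℝ≥0∞) ^ 2 ∂P ≤ t ^ 2 * ∑' k : ℕ, (k : ℝ≥0∞) ^ 2 * G k := by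
  have hmeas (s : ℕ) : Measurable fun ω => (I.ε s ω : ℝ≥0∞) ^ 2 :=
    (measurable_of_countable fun k : ℕ => (k : ℝ≥0∞) ^ 2).comp (I.hεmeas s)
  calc ∫⁻ ω, (I.X t ω : ℝ≥0∞) ^ 2 ∂P
      ≤ ∫⁻ ω, t * ∑ s ∈ Icc 1 t, (I.ε s ω : ℝ≥0∞) ^ 2 ∂P := by
        refine lintegral_mono fun ω => ?_
        have := (Nat.pow_le_pow_left (I.X_le_sum_ε t ω) 2).trans (sq_sum_le_card_mul_sum_sq ..)
        rw [Nat.card_Icc, add_tsub_cancel_right] at this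
        simpa using (Nat.cast_le (α := ℝ≥0∞)).2 this
    _ = t * ∑ s ∈ Icc 1 t, ∫⁻ ω, (I.ε s ω : ℝ≥0∞) ^ 2 ∂P := by
        rw [lintegral_const_mul' _ _ (ENNReal.natCast_ne_top t),
          lintegral_finsetSum _ fun s _ => hmeas s]
    _ = _ := by
        simp only [lintegral_ε_sq, sum_const, Nat.card_Icc, add_tsub_cancel_right, nsmul_eq_mul]
        ring

lemma measure_exists_two_le_deaths_le [IsProbabilityMeasure P] (n : ℕ) :
    P {ω | ∃ t ∈ Icc 1 n, 2 ≤ I.deaths t ω}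
      ≤ n ^ 3 * (1 - ENNReal.ofReal θ) ^ 2 * ∑' k : ℕ, (k : ℝ≥0∞) ^ 2 * G k := by
  calc P {ω | ∃ t ∈ Icc 1 n, 2 ≤ I.deaths t ω}
      ≤ ∑ t ∈ Icc 1 n, P {ω | 2 ≤ I.deaths t ω} :=
        (measure_mono fun _ hω => by obtain ⟨t, ht, hω⟩ := hω; exact Set.mem_biUnion ht hω).trans
          (measure_biUnion_finset_le _ _)
    _ ≤ ∑ t ∈ Icc 1 n, (1 - ENNReal.ofReal θ) ^ 2 * (n ^ 2 * ∑' k : ℕ, (k : ℝ≥0∞) ^ 2 * G k) := by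
        refine sum_le_sum fun t ht => (I.measure_two_le_deaths_le ?_).trans ?_
        · have := (mem_Icc.1 ht).1
          omega
        · gcongr
          refine (I.lintegral_X_sq_le _).trans ?_
          gcongr
          have := (mem_Icc.1 ht).2
          omega
    _ = _ := by
        rw [sum_const, Nat.card_Icc, add_tsub_cancel_right, nsmul_eq_mul]
        ring

end INAR

theorem inar_at_most_one_death_general
    {Ω : ℕ → Type} [∀ n, MeasurableSpace (Ω n)] (P : ∀ n, Measure (Ω n))
    [∀ n, IsProbabilityMeasure (P n)] (h : ℝ) (G : PMF ℕ)
    (M : ∀ n, INAR (P n) (1 - h / (n : ℝ) ^ 2) G)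
    (h2 : Summable (fun k : ℕ => (k : ℝ) ^ 2 * (G k).toReal)) :
    Filter.Tendsto
      (fun n : ℕ =>
        ((P n) {ω | ∃ t ∈ Finset.Icc 1 n,
            2 ≤ (M n).X (t - 1) ω -
              ∑ j ∈ Finset.range ((M n).X (t - 1) ω), (M n).Z t j ω}).toReal)
      Filter.atTop (nhds 0) := by
  set m₂ := ∑' k : ℕ, (k : ℝ≥0∞) ^ 2 * G k
  have hm₂ : m₂ ≠ ⊤ := PMF.tsum_sq_mul_ne_top h2
  refine squeeze_zero' (Eventually.of_forall fun n => ENNReal.toReal_nonneg) ?_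
    (tendsto_const_div_atTop_nhds_zero_nat (h ^ 2 * m₂.toReal))
  filter_upwards [eventually_ne_atTop 0] with n hn
  have hq := ENNReal.toReal_one_sub_ofReal_le_abs (1 - h / (n : ℝ) ^ 2)
  rw [sub_sub_cancel, abs_div, abs_of_nonneg (by positivity : (0 : ℝ) ≤ (n : ℝ) ^ 2)] at hq
  calc _ ≤ ((n : ℝ≥0∞) ^ 3 * (1 - ENNReal.ofReal (1 - h / (n : ℝ) ^ 2)) ^ 2 * m₂).toReal :=
        ENNReal.toReal_mono (by finiteness) ((M n).measure_exists_two_le_deaths_le n)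
    _ = n ^ 3 * (1 - ENNReal.ofReal (1 - h / (n : ℝ) ^ 2)).toReal ^ 2 * m₂.toReal := by
        simp only [ENNReal.toReal_mul, ENNReal.toReal_pow, ENNReal.toReal_natCast]
    _ ≤ n ^ 3 * (|h| / n ^ 2) ^ 2 * m₂.toReal := by gcongr
    _ = h ^ 2 * m₂.toReal / n := by
        field_simp
        rw [sq_abs, mul_comm]

/-- For a nearly unstable INAR(1) process with parameter `1 - h/n²`, the
probability that some time interval in `[0, n]` sees at least two 'deaths'
(`X_{t-1} - θ ∘ X_{t-1} ≥ 2`) tends to `0`. -/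
theorem inar_at_most_one_death
    {Ω : ℕ → Type} [∀ n, MeasurableSpace (Ω n)] (P : ∀ n, Measure (Ω n))
    [∀ n, IsProbabilityMeasure (P n)] (h : ℝ) (hh : 0 ≤ h) (G : PMF ℕ)
    (M : ∀ n, INAR (P n) (1 - h / (n : ℝ) ^ 2) G)
    (h2 : Summable (fun k : ℕ => (k : ℝ) ^ 2 * (G k).toReal)) :
    Filter.Tendsto
      (fun n : ℕ =>
        ((P n) {ω | ∃ t ∈ Finset.Icc 1 n,
            2 ≤ (M n).X (t - 1) ω -
              ∑ j ∈ Finset.range ((M n).X (t - 1) ω), (M n).Z t j ω}).toReal)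
      Filter.atTop (nhds 0) :=
  inar_at_most_one_death_general P h G M h2
end
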